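/- arXiv:1811.06881 — 2 statements merged into one kernel-verified Lean document; each statement's English description precedes it below -/
import Mathlib

section
/- Let R be a commutative Noetherian ring and x_1,...,x_d a regular R-sequence contained in the Jacobson radical of R. Then every nonzero monomial ideal I with respect to x_1,...,x_d can be written as a finite intersection of generalized-parametric ideals, i.e. ideals of the form x_{i_1}^{e_1}R + ... + x_{i_k}^{e_k}R with distinct indices i_1,...,i_k and positive exponents e_j. -/
/-!
Write `I_E` for the ideal generated by the monomials `x^e`, `e ∈ E`. As for monomial ideals in a
polynomial ring, `(I_E : x_k) = I_E'`, where `E'` lowers the `k`-th exponent of every `e ∈ E` by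
one. This reduces to the case where `x_k` occurs in no generator, i.e. `x_k` is a nonzerodivisor
modulo `I_E`, proved by induction on the total degree of `E` by passing to `R ⧸ (x_m)` for some
`x_m` occurring in `E`. That step needs the `x_i` to be regular in every order, which holds since
`R` is Noetherian and the `x_i` lie in the Jacobson radical.

The colon formula gives `(J, x_k^a x^w) = (J, x_k^a) ∩ (J, x^w)` whenever `x_k` does not divide
`x^w`. Splitting the mixed generators in this way lowers the number of variables they involve,
until only pure powers are left, and an ideal generated by pure powers is generalized-parametric.
Finally `I`, being finitely generated, is generated by finitely many monomials.
-/

/-- A generalized-parametric ideal with respect to the sequence `x`: an ideal generated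
by pure powers `x i ^ e i` for `i` in some subset, with all exponents positive. -/
def IsGPIdeal {R : Type*} [CommRing R] {d : ℕ} (x : Fin d → R) (q : Ideal R) : Prop :=
  ∃ (s : Finset (Fin d)) (e : Fin d → ℕ), (∀ i ∈ s, 1 ≤ e i) ∧
    q = Ideal.span ((fun i => x i ^ e i) '' s)

open RingTheory.Sequence Finset

lemma Finset.sum_insert_erase_lt {α : Type*} [DecidableEq α] {F : Finset α} {e u : α}
    (he : e ∈ F) {f : α → ℕ} (hu : f u < f e) :
    ∑ g ∈ insert u (F.erase e), f g < ∑ g ∈ F, f g := by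
  rw [← add_sum_erase F f he]
  by_cases hue : u ∈ F.erase e
  · rw [insert_eq_of_mem hue]
    omega
  · rw [sum_insert hue]
    omega

section ExponentVector

variable {ι : Type*} [DecidableEq ι]

lemma sub_single_eq_self {e : ι → ℕ} {k : ι} (h : e k = 0) (a : ℕ) :
    e - Pi.single k a = e := by
  ext i
  obtain rfl | hi := eq_or_ne i k
  · simp [h]
  · simp [hi]

lemma single_add_update_zero (e : ι → ℕ) (k : ι) :
    Pi.single k (e k) + Function.update e k 0 = e := by
  ext i
  obtain rfl | hi := eq_or_ne i k
  · simp
  · simp [hi]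

variable [Fintype ι]

lemma card_filter_single_ne_zero_le_one (k : ι) (a : ℕ) :
    #{i | (Pi.single k a : ι → ℕ) i ≠ 0} ≤ 1 := by
  refine card_le_one.mpr fun i hi j hj => ?_
  simp only [mem_filter, Pi.single_apply] at hi hj
  split_ifs at hi hj <;> simp_all

lemma card_filter_update_zero_lt {e : ι → ℕ} {k : ι} (hk : e k ≠ 0) :
    #{i | Function.update e k 0 i ≠ 0} < #{i | e i ≠ 0} := by
  have : ({i | Function.update e k 0 i ≠ 0} : Finset ι) =
      ({i | e i ≠ 0} : Finset ι).erase k := by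
    ext i
    obtain rfl | hi := eq_or_ne i k
    · simp
    · simp [hi]
  rw [this]
  exact card_erase_lt_of_mem (by simpa using hk)

lemma sum_sum_image_sub_single_lt {E : Finset (ι → ℕ)} {e : ι → ℕ} (he : e ∈ E) {m : ι}
    (hm : e m ≠ 0) :
    ∑ f ∈ E.image (· - Pi.single m 1), ∑ i, f i < ∑ f ∈ E, ∑ i, f i :=
  (sum_image_le_of_nonneg fun _ _ => Nat.zero_le _).trans_lt <|
    sum_lt_sum (fun f _ => sum_le_sum fun i _ => tsub_le_self) ⟨e, he,
      sum_lt_sum (fun i _ => tsub_le_self)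
        ⟨m, mem_univ m, by simpa [Nat.pos_iff_ne_zero] using hm⟩⟩

end ExponentVector

section Monomial

variable {ι R : Type*} [Fintype ι] [CommRing R] (x : ι → R)

def seqMonomial (e : ι → ℕ) : R := ∏ i, x i ^ e i

def seqMonomialIdeal (E : Finset (ι → ℕ)) : Ideal R := Ideal.span (seqMonomial x '' E)

lemma seqMonomial_zero : seqMonomial x 0 = 1 := by simp [seqMonomial]

lemma seqMonomial_add (u v : ι → ℕ) :
    seqMonomial x (u + v) = seqMonomial x u * seqMonomial x v := by
  simp [seqMonomial, pow_add, prod_mul_distrib]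

lemma seqMonomial_eq_pow {e : ι → ℕ} {i : ι} (h : ∀ j ≠ i, e j = 0) :
    seqMonomial x e = x i ^ e i :=
  prod_eq_single i (fun j _ hj => by rw [h j hj, pow_zero]) (by simp)

lemma seqMonomial_single [DecidableEq ι] (i : ι) (a : ℕ) :
    seqMonomial x (Pi.single i a) = x i ^ a := by
  rw [seqMonomial_eq_pow x (e := Pi.single i a) fun j hj =>
    Pi.single_eq_of_ne (M := fun _ => ℕ) hj a, Pi.single_eq_same]

lemma seqMonomial_dvd {u v : ι → ℕ} (h : u ≤ v) : seqMonomial x u ∣ seqMonomial x v :=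
  ⟨seqMonomial x (v - u), by rw [← seqMonomial_add, add_tsub_cancel_of_le h]⟩

lemma seqMonomial_dvd_mul_pow [DecidableEq ι] (e : ι → ℕ) (k : ι) (a : ℕ) :
    seqMonomial x e ∣ seqMonomial x (e - Pi.single k a) * x k ^ a := by
  rw [← seqMonomial_single, ← seqMonomial_add]
  exact seqMonomial_dvd x le_tsub_add

lemma mul_seqMonomial_sub_single [DecidableEq ι] {e : ι → ℕ} {k : ι} (h : e k ≠ 0) :
    x k * seqMonomial x (e - Pi.single k 1) = seqMonomial x e := by
  rw [← pow_one (x k), ← seqMonomial_single, ← seqMonomial_add, add_tsub_cancel_of_le]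
  intro i
  obtain rfl | hi := eq_or_ne i k
  · simpa [Nat.one_le_iff_ne_zero] using h
  · simp [hi]

lemma map_seqMonomial {S : Type*} [CommRing S] (f : R →+* S) (e : ι → ℕ) :
    f (seqMonomial x e) = seqMonomial (f ∘ x) e := by
  simp [seqMonomial]

lemma seqMonomial_eq_zero {m : ι} (hm : x m = 0) {e : ι → ℕ} (he : e m ≠ 0) :
    seqMonomial x e = 0 :=
  prod_eq_zero (mem_univ m) (by rw [hm, zero_pow he])

variable {x}

lemma seqMonomial_mem_seqMonomialIdeal {E : Finset (ι → ℕ)} {e : ι → ℕ} (he : e ∈ E) :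
    seqMonomial x e ∈ seqMonomialIdeal x E :=
  Ideal.subset_span ⟨e, he, rfl⟩

lemma seqMonomialIdeal_le_iff {E : Finset (ι → ℕ)} {J : Ideal R} :
    seqMonomialIdeal x E ≤ J ↔ ∀ e ∈ E, seqMonomial x e ∈ J := by
  simp [seqMonomialIdeal, Ideal.span_le, Set.subset_def]

lemma seqMonomialIdeal_mono {E F : Finset (ι → ℕ)} (h : E ⊆ F) :
    seqMonomialIdeal x E ≤ seqMonomialIdeal x F :=
  Ideal.span_mono (Set.image_mono h)

lemma mul_mem_of_forall_seqMonomial_mul_mem {E : Finset (ι → ℕ)} {J : Ideal R} {c z : R}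
    (h : ∀ e ∈ E, seqMonomial x e * c ∈ J) (hz : z ∈ seqMonomialIdeal x E) :
    z * c ∈ J := by
  have : seqMonomialIdeal x E ≤ J.colon {c} :=
    seqMonomialIdeal_le_iff.mpr fun e he => Submodule.mem_colon_singleton.mpr (h e he)
  exact Submodule.mem_colon_singleton.mp (this hz)

variable (x)

@[simp]
lemma seqMonomialIdeal_empty : seqMonomialIdeal x ∅ = ⊥ := by
  simp [seqMonomialIdeal]

lemma seqMonomialIdeal_insert (e : ι → ℕ) (E : Finset (ι → ℕ)) :
    seqMonomialIdeal x (insert e E) = Ideal.span {seqMonomial x e} ⊔ seqMonomialIdeal x E := by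
  rw [seqMonomialIdeal, coe_insert, Set.image_insert_eq, Ideal.span_insert]
  rfl

lemma seqMonomialIdeal_union (E F : Finset (ι → ℕ)) :
    seqMonomialIdeal x (E ∪ F) = seqMonomialIdeal x E ⊔ seqMonomialIdeal x F := by
  rw [seqMonomialIdeal, coe_union, Set.image_union, Ideal.span_union]
  rfl

lemma seqMonomialIdeal_insert_le_insert {u v : ι → ℕ} (huv : u ≤ v)
    (E : Finset (ι → ℕ)) :
    seqMonomialIdeal x (insert v E) ≤ seqMonomialIdeal x (insert u E) := by
  refine seqMonomialIdeal_le_iff.mpr fun e he => ?_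
  obtain rfl | he := mem_insert.mp he
  · exact Ideal.mem_of_dvd _ (seqMonomial_dvd x huv)
      (seqMonomial_mem_seqMonomialIdeal (mem_insert_self u E))
  · exact seqMonomial_mem_seqMonomialIdeal (mem_insert_of_mem he)

lemma seqMonomialIdeal_eq_top {E : Finset (ι → ℕ)} (h : 0 ∈ E) :
    seqMonomialIdeal x E = ⊤ :=
  (Ideal.eq_top_iff_one _).mpr (seqMonomial_zero x ▸ seqMonomial_mem_seqMonomialIdeal h)

lemma map_seqMonomialIdeal {S : Type*} [CommRing S] (f : R →+* S) (E : Finset (ι → ℕ)) :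
    (seqMonomialIdeal x E).map f = seqMonomialIdeal (f ∘ x) E := by
  rw [seqMonomialIdeal, Ideal.map_span, ← Set.image_comp]
  exact congrArg Ideal.span (Set.image_congr fun e _ => map_seqMonomial x f e)

lemma seqMonomialIdeal_filter_of_eq_zero {m : ι} (hm : x m = 0) (E : Finset (ι → ℕ)) :
    seqMonomialIdeal x (E.filter (· m = 0)) = seqMonomialIdeal x E := by
  refine le_antisymm (seqMonomialIdeal_mono (filter_subset _ _))
    (seqMonomialIdeal_le_iff.mpr fun e he => ?_)
  by_cases hem : e m = 0
  · exact seqMonomial_mem_seqMonomialIdeal (mem_filter.mpr ⟨he, hem⟩)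
  · rw [seqMonomial_eq_zero x hm hem]
    exact zero_mem _

variable {x} in
lemma mem_seqMonomialIdeal_sup_of_mk_mem {J : Ideal R} {E : Finset (ι → ℕ)} {z : R}
    (h : Ideal.Quotient.mk J z ∈ seqMonomialIdeal (Ideal.Quotient.mk J ∘ x) E) :
    z ∈ seqMonomialIdeal x E ⊔ J := by
  rwa [← map_seqMonomialIdeal, ← Ideal.mem_comap,
    Ideal.comap_map_of_surjective' _ Ideal.Quotient.mk_surjective, Ideal.mk_ker] at h

end Monomial

section Regular

variable {ι R : Type*} [CommRing R]

/-- Unlike weak regularity of a single ordering of `x`, this passes to `R ⧸ (x m)`, with `S`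
replaced by `S.erase m`. -/
def IsWeaklyRegularOn (x : ι → R) (S : Finset ι) : Prop :=
  ∀ l : List ι, l.Nodup → (∀ i ∈ l, i ∈ S) → IsWeaklyRegular R (l.map x)

open Pointwise in
lemma Ideal.span_singleton_eq_smul_top (r : R) : Ideal.span {r} = (r • ⊤ : Submodule R R) := by
  rw [← Submodule.ideal_span_singleton_smul, smul_eq_mul, Ideal.mul_top]

variable {x : ι → R} {S : Finset ι}

lemma IsWeaklyRegularOn.isSMulRegular (hx : IsWeaklyRegularOn x S) {k : ι} (hk : k ∈ S) :
    IsSMulRegular R (x k) := by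
  simpa using hx [k] (List.nodup_singleton k) (by simpa)

lemma IsWeaklyRegularOn.quotient [DecidableEq ι] (hx : IsWeaklyRegularOn x S) {m : ι}
    (hm : m ∈ S) :
    IsWeaklyRegularOn (Ideal.Quotient.mk (Ideal.span {x m}) ∘ x) (S.erase m) := by
  intro l hl hlS
  have hml : m ∉ l := fun h => (mem_erase.mp (hlS m h)).1 rfl
  have hcons := hx (m :: l) (List.nodup_cons.mpr ⟨hml, hl⟩) fun i hi =>
    (List.mem_cons.mp hi).elim (· ▸ hm) fun hi => mem_of_mem_erase (hlS i hi)
  rw [List.map_cons, isWeaklyRegular_cons_iff] at hcons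
  have hquot : IsWeaklyRegular (R ⧸ Ideal.span {x m}) (l.map x) :=
    ((Submodule.quotEquivOfEq _ _ (Ideal.span_singleton_eq_smul_top (x m)).symm
      ).isWeaklyRegular_congr _).mp hcons.2
  rw [← List.map_map, ← Ideal.Quotient.algebraMap_eq]
  exact (isWeaklyRegular_map_algebraMap_iff _ _ _).mpr hquot

lemma isWeaklyRegularOn_univ_of_mem_jacobson [IsNoetherianRing R] {d : ℕ} {x : Fin d → R}
    (hx : IsWeaklyRegular R (List.ofFn x)) (hjac : ∀ i, x i ∈ (⊥ : Ideal R).jacobson) :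
    IsWeaklyRegularOn x univ := by
  intro l hl _
  have hperm : (l ++ (List.finRange d).diff l).Perm (List.finRange d) :=
    List.subperm_append_diff_self_of_count_le
      (List.subperm_ext_iff.mp (hl.subperm fun i _ => List.mem_finRange i))
  have hjac' : ∀ r ∈ List.ofFn x, r ∈ (Module.annihilator R R).jacobson := by
    rw [Module.annihilator_eq_bot.mpr inferInstance]
    simpa [List.mem_ofFn] using hjac
  have happ : IsWeaklyRegular R ((l ++ (List.finRange d).diff l).map x) :=
    hx.of_perm_of_subset_jacobson_annihilator
      (by rw [List.ofFn_eq_map]; exact (hperm.map x).symm) hjac'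
  rw [List.map_append, isWeaklyRegular_append_iff] at happ
  exact happ.1

end Regular

section Colon

variable {ι R : Type*} [Fintype ι] [DecidableEq ι] [CommRing R] {x : ι → R}

lemma mul_pow_mem_seqMonomialIdeal {E : Finset (ι → ℕ)} {k : ι} {a : ℕ} {c : R}
    (hc : c ∈ seqMonomialIdeal x (E.image (· - Pi.single k a))) :
    c * x k ^ a ∈ seqMonomialIdeal x E := by
  refine mul_mem_of_forall_seqMonomial_mul_mem ?_ hc
  simp only [forall_mem_image]
  exact fun e he => Ideal.mem_of_dvd _ (seqMonomial_dvd_mul_pow x e k a)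
    (seqMonomial_mem_seqMonomialIdeal he)

lemma mem_seqMonomialIdeal_image_of_mul_mem {E : Finset (ι → ℕ)} {k : ι} {z : R}
    (hreg : ∀ t, t * x k ∈ seqMonomialIdeal x (E.filter (· k = 0)) →
      t ∈ seqMonomialIdeal x (E.filter (· k = 0)))
    (h : z * x k ∈ seqMonomialIdeal x E) :
    z ∈ seqMonomialIdeal x (E.image (· - Pi.single k 1)) := by
  set E₀ := E.filter (· k = 0)
  set E₁ := E.filter fun e => ¬e k = 0
  have hE : E₀ ∪ E₁ = E := filter_union_filter_not_eq _ _
  have hE₀ : E₀.image (· - Pi.single k 1) = E₀ :=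
    (image_congr fun e he => sub_single_eq_self (mem_filter.mp he).2 1).trans image_id'
  have hE₁ : seqMonomialIdeal x E₁ ≤
      Ideal.span {x k} * seqMonomialIdeal x (E₁.image (· - Pi.single k 1)) :=
    seqMonomialIdeal_le_iff.mpr fun e he => by
      rw [← mul_seqMonomial_sub_single x (mem_filter.mp he).2]
      exact Ideal.mul_mem_mul (Ideal.mem_span_singleton_self _)
        (seqMonomial_mem_seqMonomialIdeal (mem_image_of_mem _ he))
  rw [← hE, seqMonomialIdeal_union] at h
  obtain ⟨p, hp, q, hq, hpq⟩ := Submodule.mem_sup.mp h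
  obtain ⟨b, hb, rfl⟩ := Ideal.mem_span_singleton_mul.mp (hE₁ hq)
  have hzb : z - b ∈ seqMonomialIdeal x E₀ :=
    hreg _ (by rwa [sub_mul, ← hpq, mul_comm b, add_sub_cancel_right])
  rw [← hE, image_union, hE₀, seqMonomialIdeal_union]
  simpa using Submodule.add_mem_sup hzb hb

theorem mem_seqMonomialIdeal_of_mul_mem {S : Finset ι} (hx : IsWeaklyRegularOn x S)
    {E : Finset (ι → ℕ)} (hES : ∀ e ∈ E, ∀ i ∉ S, e i = 0) {k : ι} (hk : k ∈ S)
    (hEk : ∀ e ∈ E, e k = 0) {z : R} (h : z * x k ∈ seqMonomialIdeal x E) :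
    z ∈ seqMonomialIdeal x E := by
  induction hn : ∑ e ∈ E, ∑ i, e i using Nat.strong_induction_on generalizing R S E k z with
  | _ n ih =>
  by_cases h0 : (0 : ι → ℕ) ∈ E
  · simp [seqMonomialIdeal_eq_top x h0]
  obtain rfl | ⟨es, hes⟩ := E.eq_empty_or_nonempty
  · rw [seqMonomialIdeal_empty, Ideal.mem_bot] at h ⊢
    exact hx.isSMulRegular hk (by simpa [mul_comm] using h)
  obtain ⟨m, hm⟩ : ∃ m, es m ≠ 0 := Function.ne_iff.mp (ne_of_mem_of_not_mem hes h0)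
  have hmS : m ∈ S := by_contra fun hmS => hm (hES es hes m hmS)
  have hmk : m ≠ k := fun hmk => hm (hmk ▸ hEk es hes)
  set E₀ := E.filter (· m = 0)
  have hE₀ : ∑ e ∈ E₀, ∑ i, e i < n := hn ▸ sum_lt_sum_of_subset (filter_subset _ _) hes
    (fun h => hm (mem_filter.mp h).2)
    ((Nat.pos_of_ne_zero hm).trans_le (single_le_sum (fun _ _ => Nat.zero_le _) (mem_univ m)))
    (fun _ _ _ => Nat.zero_le _)
  -- modulo `x m` only the generators in `E₀` survive, and they involve one variable less
  have hmod : z ∈ seqMonomialIdeal x E₀ ⊔ Ideal.span {x m} := by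
    let π := Ideal.Quotient.mk (Ideal.span {x m})
    have hπ : π z * (π ∘ x) k ∈ seqMonomialIdeal (π ∘ x) E₀ := by
      rw [seqMonomialIdeal_filter_of_eq_zero _ (Ideal.Quotient.eq_zero_iff_mem.mpr
        (Ideal.mem_span_singleton_self _)), ← map_seqMonomialIdeal, Function.comp_apply,
        ← map_mul]
      exact Ideal.mem_map_of_mem π h
    have hE₀S : ∀ e ∈ E₀, ∀ i ∉ S.erase m, e i = 0 := by
      intro e he i hi
      obtain rfl | him := eq_or_ne i m
      · exact (mem_filter.mp he).2
      · exact hES e (mem_filter.mp he).1 i fun hiS => hi (mem_erase.mpr ⟨him, hiS⟩)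
    exact mem_seqMonomialIdeal_sup_of_mk_mem (ih _ hE₀ (hx.quotient hmS) hE₀S
      (mem_erase.mpr ⟨hmk.symm, hk⟩) (fun e he => hEk e (mem_filter.mp he).1) hπ rfl)
  obtain ⟨p, hp, _, hc, rfl⟩ := Submodule.mem_sup.mp hmod
  obtain ⟨c, rfl⟩ := Ideal.mem_span_singleton'.mp hc
  have hp' : p ∈ seqMonomialIdeal x E := seqMonomialIdeal_mono (filter_subset _ _) hp
  have hckm : c * x k * x m ∈ seqMonomialIdeal x E := by
    rw [show c * x k * x m = (p + c * x m) * x k - p * x k by ring]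
    exact sub_mem h (Ideal.mul_mem_right _ _ hp')
  have hck : c * x k ∈ seqMonomialIdeal x (E.image (· - Pi.single m 1)) :=
    mem_seqMonomialIdeal_image_of_mul_mem (fun t ht => ih _ hE₀ hx
      (fun e he => hES e (mem_filter.mp he).1) hmS (fun e he => (mem_filter.mp he).2) ht rfl)
      hckm
  have hc : c ∈ seqMonomialIdeal x (E.image (· - Pi.single m 1)) := by
    refine ih _ (hn ▸ sum_sum_image_sub_single_lt hes hm) hx ?_ hk ?_ hck rfl
    · simp only [forall_mem_image]
      intro e he i hi
      simp [hES e he i hi]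
    · simp only [forall_mem_image]
      intro e he
      simp [hEk e he, hmk.symm]
  exact add_mem hp' (by simpa using mul_pow_mem_seqMonomialIdeal (a := 1) hc)

theorem mem_seqMonomialIdeal_image_of_mul_pow_mem (hx : IsWeaklyRegularOn x univ)
    {E : Finset (ι → ℕ)} {k : ι} {a : ℕ} {z : R}
    (h : z * x k ^ a ∈ seqMonomialIdeal x E) :
    z ∈ seqMonomialIdeal x (E.image (· - Pi.single k a)) := by
  induction a generalizing E z with
  | zero => simpa using h
  | succ a ih =>
    have h₁ : z * x k ^ a ∈ seqMonomialIdeal x (E.image (· - Pi.single k 1)) :=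
      mem_seqMonomialIdeal_image_of_mul_mem
        (fun t => mem_seqMonomialIdeal_of_mul_mem hx (by simp) (mem_univ k)
          fun e he => (mem_filter.mp he).2)
        (by rwa [mul_assoc, ← pow_succ])
    simpa [image_image, Function.comp_def, tsub_tsub, ← Pi.single_add, add_comm] using ih h₁

theorem seqMonomialIdeal_insert_single_add (hx : IsWeaklyRegularOn x univ)
    (E : Finset (ι → ℕ)) (k : ι) (a : ℕ) {w : ι → ℕ} (hw : w k = 0) :
    seqMonomialIdeal x (insert (Pi.single k a + w) E) =
      seqMonomialIdeal x (insert (Pi.single k a) E) ⊓ seqMonomialIdeal x (insert w E) := by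
  refine le_antisymm (le_inf (seqMonomialIdeal_insert_le_insert x le_self_add E)
    (seqMonomialIdeal_insert_le_insert x le_add_self E)) fun f ⟨h₁, h₂⟩ => ?_
  rw [seqMonomialIdeal_insert, seqMonomial_single] at h₁
  rw [seqMonomialIdeal_insert] at h₂
  obtain ⟨_, hr, g, hg, rfl⟩ := Submodule.mem_sup.mp h₁
  obtain ⟨_, hs, h, hh, hf⟩ := Submodule.mem_sup.mp h₂
  obtain ⟨r, rfl⟩ := Ideal.mem_span_singleton'.mp hr
  obtain ⟨s, rfl⟩ := Ideal.mem_span_singleton'.mp hs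
  have hrw : r * x k ^ a ∈ seqMonomialIdeal x (insert w E) := by
    rw [show r * x k ^ a = s * seqMonomial x w + (h - g) by linear_combination -hf,
      seqMonomialIdeal_insert]
    exact add_mem (Ideal.mem_sup_left (Ideal.mul_mem_left _ _ (Ideal.mem_span_singleton_self _)))
      (Ideal.mem_sup_right (sub_mem hh hg))
  refine add_mem (mul_mem_of_forall_seqMonomial_mul_mem ?_
    (mem_seqMonomialIdeal_image_of_mul_pow_mem hx hrw))
    (seqMonomialIdeal_mono (subset_insert _ _) hg)
  simp only [forall_mem_image, forall_mem_insert]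
  refine ⟨?_, fun e he => Ideal.mem_of_dvd _ (seqMonomial_dvd_mul_pow x e k a)
    (seqMonomial_mem_seqMonomialIdeal (mem_insert_of_mem he))⟩
  rw [sub_single_eq_self hw, mul_comm, ← seqMonomial_single, ← seqMonomial_add]
  exact seqMonomial_mem_seqMonomialIdeal (mem_insert_self _ _)

end Colon

section GeneralizedParametric

variable {R : Type*} {d : ℕ} [CommRing R] {x : Fin d → R}

lemma isGPIdeal_bot : IsGPIdeal x ⊥ := ⟨∅, 0, by simp, by simp⟩

lemma IsGPIdeal.sup_span_pow {q : Ideal R} (hq : IsGPIdeal x q) (i : Fin d) {a : ℕ}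
    (ha : 1 ≤ a) : IsGPIdeal x (q ⊔ Ideal.span {x i ^ a}) := by
  obtain ⟨s, ε, hε, rfl⟩ := hq
  -- `(x i ^ c, x i ^ a) = (x i ^ min c a)`
  set b := if i ∈ s then min (ε i) a else a
  have hba : b ≤ a := by simp only [b]; split_ifs <;> omega
  have hbε (hi : i ∈ s) : b ≤ ε i := by simp [b, hi]
  have hb : b = a ∨ (i ∈ s ∧ b = ε i) := by
    by_cases hi : i ∈ s
    · simp only [b, if_pos hi, hi, true_and]
      omega
    · simp [b, hi]
  refine ⟨insert i s, Function.update ε i b, fun j hj => ?_, le_antisymm ?_ ?_⟩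
  · obtain rfl | hji := eq_or_ne j i
    · rcases hb with h | ⟨hi, h⟩
      · simpa [h] using ha
      · simpa [h] using hε j hi
    · simpa [hji] using hε j ((mem_insert.mp hj).resolve_left hji)
  · have hgen {j : Fin d} (hj : j ∈ insert i s) :
        x j ^ Function.update ε i b j ∈
          Ideal.span ((fun j => x j ^ Function.update ε i b j) '' ↑(insert i s)) :=
      Ideal.subset_span ⟨j, hj, rfl⟩
    have hi := hgen (mem_insert_self i s)
    rw [Function.update_self] at hi
    refine sup_le (Ideal.span_le.mpr ?_)
      ((Ideal.span_singleton_le_iff_mem _).mpr (Ideal.mem_of_dvd _ (pow_dvd_pow _ hba) hi))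
    rintro _ ⟨j, hj, rfl⟩
    obtain rfl | hji := eq_or_ne j i
    · exact Ideal.mem_of_dvd _ (pow_dvd_pow _ (hbε hj)) hi
    · simpa [hji] using hgen (mem_insert_of_mem hj)
  · refine Ideal.span_le.mpr ?_
    rintro _ ⟨j, hj, rfl⟩
    obtain rfl | hji := eq_or_ne j i
    · rcases hb with h | ⟨hi, h⟩
      · simpa [h] using Ideal.mem_sup_right (Ideal.mem_span_singleton_self (x j ^ a))
      · simpa [h] using Ideal.mem_sup_left (Ideal.subset_span (Set.mem_image_of_mem
          (fun j => x j ^ ε j) (mem_coe.mpr hi)))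
    · simpa [hji] using Ideal.mem_sup_left (Ideal.subset_span (Set.mem_image_of_mem
        (fun j => x j ^ ε j) (mem_coe.mpr ((mem_insert.mp hj).resolve_left hji))))

lemma isGPIdeal_seqMonomialIdeal {F : Finset (Fin d → ℕ)}
    (hF : ∀ e ∈ F, e ≠ 0 ∧ #{i | e i ≠ 0} ≤ 1) :
    IsGPIdeal x (seqMonomialIdeal x F) := by
  induction F using Finset.induction_on with
  | empty => simpa using isGPIdeal_bot
  | insert e F _ ih =>
    rw [forall_mem_insert] at hF
    obtain ⟨⟨he0, he1⟩, hF⟩ := hF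
    obtain ⟨i, hi⟩ := Function.ne_iff.mp he0
    have hpure : ∀ j ≠ i, e j = 0 := fun j hji => by_contra fun hj =>
      hji (card_le_one.mp he1 j (by simpa using hj) i (by simpa using hi))
    rw [seqMonomialIdeal_insert, sup_comm, seqMonomial_eq_pow x hpure]
    exact (ih hF).sup_span_pow i (Nat.one_le_iff_ne_zero.mpr hi)

theorem exists_finset_isGPIdeal_inf_eq (hx : IsWeaklyRegularOn x univ)
    (F : Finset (Fin d → ℕ)) :
    ∃ Q : Finset (Ideal R), (∀ q ∈ Q, IsGPIdeal x q) ∧ seqMonomialIdeal x F = Q.inf id := by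
  induction hn : ∑ e ∈ F, (#{i | e i ≠ 0} - 1) using Nat.strong_induction_on
    generalizing F with
  | _ n ih =>
  by_cases h0 : 0 ∈ F
  · exact ⟨∅, by simp, by simp [seqMonomialIdeal_eq_top x h0]⟩
  by_cases hpure : ∀ e ∈ F, #{i | e i ≠ 0} ≤ 1
  · exact ⟨{seqMonomialIdeal x F}, by simpa using isGPIdeal_seqMonomialIdeal fun e he =>
      ⟨ne_of_mem_of_not_mem he h0, hpure e he⟩, by simp⟩
  push Not at hpure
  obtain ⟨e, he, he2⟩ := hpure
  obtain ⟨k, hk⟩ := Function.ne_iff.mp (ne_of_mem_of_not_mem he h0)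
  have hsplit := seqMonomialIdeal_insert_single_add hx (F.erase e) k (e k)
    (Function.update_self k 0 e)
  rw [single_add_update_zero, insert_erase he] at hsplit
  have hlt (u : Fin d → ℕ) (hu : #{i | u i ≠ 0} < #{i | e i ≠ 0}) :
      ∑ f ∈ insert u (F.erase e), (#{i | f i ≠ 0} - 1) < n :=
    hn ▸ sum_insert_erase_lt he (f := fun f => #{i | f i ≠ 0} - 1) (by omega)
  obtain ⟨Q₁, hQ₁, h₁⟩ :=
    ih _ (hlt _ ((card_filter_single_ne_zero_le_one k (e k)).trans_lt he2)) _ rfl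
  obtain ⟨Q₂, hQ₂, h₂⟩ := ih _ (hlt _ (card_filter_update_zero_lt hk)) _ rfl
  refine ⟨Q₁ ∪ Q₂, fun q hq => (mem_union.mp hq).elim (hQ₁ q) (hQ₂ q), ?_⟩
  rw [hsplit, h₁, h₂, inf_union]

end GeneralizedParametric

lemma exists_finset_span_seqMonomial_image_eq {ι R : Type*} [Fintype ι] [CommRing R]
    [IsNoetherianRing R] (x : ι → R) (E : Set (ι → ℕ)) :
    ∃ F : Finset (ι → ℕ), Ideal.span (seqMonomial x '' E) = seqMonomialIdeal x F := by
  classical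
  obtain ⟨s, hsE, hs⟩ := (Submodule.fg_span_iff_fg_span_finset_subset _).mp
    (IsNoetherian.noetherian (Ideal.span (seqMonomial x '' E)))
  obtain ⟨F, -, rfl⟩ := Finset.subset_set_image_iff.mp hsE
  exact ⟨F, by rw [Ideal.span, hs, seqMonomialIdeal, coe_image]⟩

lemma Finset.inf_id_eq_iInf_equivFin {α : Type*} [CompleteLattice α] (Q : Finset α) :
    Q.inf id = ⨅ j, (Q.equivFin.symm j : α) := by
  rw [inf_eq_iInf, iInf_subtype', ← Q.equivFin.symm.iInf_comp]
  rfl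

theorem stmt_3_general {R : Type*} [CommRing R] [IsNoetherianRing R] {d : ℕ} (x : Fin d → R)
    (hreg : RingTheory.Sequence.IsRegular R (List.ofFn x))
    (hjac : ∀ i, x i ∈ Ideal.jacobson (⊥ : Ideal R))
    (I : Ideal R)
    (hmono : ∃ E : Set (Fin d → ℕ), I = Ideal.span ((fun e => ∏ i, x i ^ e i) '' E)) :
    ∃ (n : ℕ) (q : Fin n → Ideal R), (∀ j, IsGPIdeal x (q j)) ∧ I = ⨅ j, q j := by
  obtain ⟨E, rfl⟩ := hmono
  obtain ⟨F, hF⟩ := exists_finset_span_seqMonomial_image_eq x E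
  obtain ⟨Q, hQ, hFQ⟩ := exists_finset_isGPIdeal_inf_eq
    (isWeaklyRegularOn_univ_of_mem_jacobson hreg.toIsWeaklyRegular hjac) F
  refine ⟨#Q, fun j => Q.equivFin.symm j, fun j => hQ _ (Q.equivFin.symm j).2, ?_⟩
  rw [← Q.inf_id_eq_iInf_equivFin, ← hFQ, ← hF]
  rfl

theorem stmt_3 {R : Type*} [CommRing R] [IsNoetherianRing R] {d : ℕ} (x : Fin d → R)
    (hreg : RingTheory.Sequence.IsRegular R (List.ofFn x))
    (hjac : ∀ i, x i ∈ Ideal.jacobson (⊥ : Ideal R))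
    (I : Ideal R) (hIproper : I ≠ ⊤) (hI0 : I ≠ ⊥)
    (hmono : ∃ E : Set (Fin d → ℕ), I = Ideal.span ((fun e => ∏ i, x i ^ e i) '' E)) :
    ∃ (n : ℕ) (q : Fin n → Ideal R), (∀ j, IsGPIdeal x (q j)) ∧ I = ⨅ j, q j :=
  stmt_3_general x hreg hjac I hmono
end

section
/- Let R be a commutative Noetherian ring, x_1,...,x_d a regular R-sequence in the Jacobson radical of R with (x_1,...,x_d)R prime, and let I be a squarefree monomial ideal. Then I equals the intersection of the minimal primes of I. -/
/-!
Write `x^s = ∏ i ∈ s, x i` and `I(T)` for the ideal generated by the `x^s`, `s ∈ T`. Since the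
`x i` lie in the Jacobson radical of a Noetherian ring, every permutation of the regular sequence
is regular, so each `x k` is a nonzerodivisor modulo `(x i | i ∈ A)` for every set `A ∌ k`.

Splitting off one variable, `I(T) = I(T₀) + x i · I(T')`, where `T₀` are the supports
avoiding `i` and `T'` is `T` with `i` erased from every support. Induction on the number of
variables then shows that `x k` stays a nonzerodivisor modulo `(x_A) + I(T)` when `k` avoids `A`
and all supports, and that `I(T)` is the intersection of the ideals `(x_F)` over the sets `F`
meeting every support.

Each `(x_F)` is prime: dropping one generator at a time from `(x_1, …, x_d)`, Krull's intersection
theorem shows that if `J + (a)` is prime, `a` is a nonzerodivisor modulo `J` and `a` lies in the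
Jacobson radical of `J`, then `J` is prime. Hence `√I ⊆ ⋂ (x_F) = I`.
-/

open Ideal RingTheory.Sequence

section

variable {R : Type*} [CommRing R]

section Krull

variable [IsNoetherianRing R] {a : R}

theorem exists_eq_pow_mul_and_not_dvd_of_mem_jacobson (ha : a ∈ jacobson (⊥ : Ideal R)) {z : R}
    (hz : z ≠ 0) : ∃ (m : ℕ) (w : R), z = a ^ m * w ∧ ¬a ∣ w := by
  suffices hfin : FiniteMultiplicity a z from ⟨_, hfin.exists_eq_pow_mul_and_not_dvd⟩
  by_contra hdvd
  push Not at hdvd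
  refine hz ((Submodule.eq_bot_iff _).1 (iInf_pow_smul_eq_bot_of_le_jacobson (M := R) (span {a})
    (span_le.2 (Set.singleton_subset_iff.2 ha))) z (Submodule.mem_iInf _ |>.2 fun n => ?_))
  rw [smul_eq_mul, mul_top, span_singleton_pow, mem_span_singleton]
  cases n with
  | zero => exact pow_zero a ▸ one_dvd z
  | succ n => exact hdvd n

theorem isDomain_of_isPrime_span_singleton (ha : a ∈ jacobson (⊥ : Ideal R))
    (hreg : IsSMulRegular R a) (hp : (span {a}).IsPrime) : IsDomain R := by
  have : Nontrivial R :=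
    ⟨⟨1, 0, fun h => hp.ne_top ((eq_top_iff_one _).2 (h ▸ zero_mem _))⟩⟩
  have : NoZeroDivisors R := by
    refine ⟨fun {b c} hbc => or_iff_not_and_not.2 fun ⟨hb, hc⟩ => ?_⟩
    obtain ⟨m, b', rfl, hb'⟩ := exists_eq_pow_mul_and_not_dvd_of_mem_jacobson ha hb
    obtain ⟨n, c', rfl, hc'⟩ := exists_eq_pow_mul_and_not_dvd_of_mem_jacobson ha hc
    have hbc' : b' * c' = 0 := (hreg.pow (m + n)).right_eq_zero_of_smul
      (by rw [smul_eq_mul, ← hbc]; ring)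
    rcases hp.mem_or_mem (hbc' ▸ zero_mem _ : b' * c' ∈ span {a}) with h | h <;>
      rw [mem_span_singleton] at h
    exacts [hb' h, hc' h]
  exact NoZeroDivisors.to_isDomain R

theorem isPrime_of_isPrime_sup_span_singleton {J : Ideal R} (ha : a ∈ J.jacobson)
    (hreg : ∀ r, a * r ∈ J → r ∈ J) (hp : (J ⊔ span {a}).IsPrime) : J.IsPrime := by
  let π := Ideal.Quotient.mk J
  have hker : RingHom.ker π ≤ J ⊔ span {a} := mk_ker.trans_le le_sup_left
  have hpq : (span {π a}).IsPrime := by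
    have := map_isPrime_of_surjective Quotient.mk_surjective hker
    rwa [Ideal.map_sup, map_quotient_self, bot_sup_eq, map_span, Set.image_singleton] at this
  have hjq : π a ∈ jacobson (⊥ : Ideal (R ⧸ J)) := by
    rw [← mem_comap, comap_jacobson_of_surjective Quotient.mk_surjective,
      ← RingHom.ker_eq_comap_bot, mk_ker]
    exact ha
  have hregq : IsSMulRegular (R ⧸ J) (π a) :=
    (isSMulRegular_quotient_iff_mem_of_smul_mem J a).2 hreg
  rw [← Quotient.isDomain_iff_prime]
  exact isDomain_of_isPrime_span_singleton hjq hregq hpq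

end Krull

section Monomial

variable {ι : Type*} (x : ι → R)

def monomialIdeal (T : Set (Finset ι)) : Ideal R :=
  span ((fun s => ∏ i ∈ s, x i) '' T)

variable {x}

theorem monomialIdeal_mono {T T' : Set (Finset ι)} (h : T ⊆ T') :
    monomialIdeal x T ≤ monomialIdeal x T' :=
  span_mono (Set.image_mono h)

theorem monomialIdeal_empty : monomialIdeal x (∅ : Set (Finset ι)) = ⊥ := by
  rw [monomialIdeal, Set.image_empty, span_empty]

theorem monomialIdeal_eq_top_of_empty_mem {T : Set (Finset ι)} (h : ∅ ∈ T) :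
    monomialIdeal x T = ⊤ :=
  (eq_top_iff_one _).2 (subset_span ⟨∅, h, Finset.prod_empty⟩)

theorem monomialIdeal_le_span_image {T : Set (Finset ι)} {F : Set ι}
    (hF : ∀ s ∈ T, ∃ i ∈ s, i ∈ F) : monomialIdeal x T ≤ span (x '' F) := by
  refine span_le.2 ?_
  rintro _ ⟨s, hs, rfl⟩
  obtain ⟨i, his, hiF⟩ := hF s hs
  exact mem_of_dvd _ (Finset.dvd_prod_of_mem x his) (subset_span ⟨i, hiF, rfl⟩)

variable [DecidableEq ι]

theorem filter_notMem_subset_image_erase (T : Set (Finset ι)) (i : ι) :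
    {s ∈ T | i ∉ s} ⊆ (·.erase i) '' T :=
  fun s ⟨hs, hi⟩ => ⟨s, hs, Finset.erase_eq_of_notMem hi⟩

theorem span_singleton_mul_monomialIdeal_image_erase_le (T : Set (Finset ι)) (i : ι) :
    span {x i} * monomialIdeal x ((·.erase i) '' T) ≤ monomialIdeal x T := by
  rw [monomialIdeal, monomialIdeal, span_mul_span', Set.singleton_mul, span_le]
  rintro _ ⟨_, ⟨_, ⟨s, hs, rfl⟩, rfl⟩, rfl⟩
  dsimp only
  by_cases hi : i ∈ s
  · exact subset_span ⟨s, hs, (Finset.mul_prod_erase s x hi).symm⟩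
  · rw [Finset.erase_eq_of_notMem hi]
    exact mul_mem_left _ _ (subset_span ⟨s, hs, rfl⟩)

theorem monomialIdeal_eq_sup (T : Set (Finset ι)) (i : ι) :
    monomialIdeal x T =
      monomialIdeal x {s ∈ T | i ∉ s} ⊔ span {x i} * monomialIdeal x ((·.erase i) '' T) := by
  refine le_antisymm (span_le.2 ?_)
    (sup_le (monomialIdeal_mono fun s hs => hs.1)
      (span_singleton_mul_monomialIdeal_image_erase_le T i))
  rintro _ ⟨s, hs, rfl⟩
  dsimp only
  by_cases hi : i ∈ s
  · rw [SetLike.mem_coe, ← Finset.mul_prod_erase s x hi]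
    exact mem_sup_right
      (mul_mem_mul (mem_span_singleton_self _) (subset_span ⟨_, ⟨s, hs, rfl⟩, rfl⟩))
  · exact mem_sup_left (subset_span ⟨s, ⟨hs, hi⟩, rfl⟩)

variable {J : Ideal R} {T : Set (Finset ι)} {i : ι}

theorem mul_mem_sup_monomialIdeal {z : R} (hz : z ∈ J ⊔ monomialIdeal x ((·.erase i) '' T)) :
    x i * z ∈ J ⊔ monomialIdeal x T := by
  have : span {x i} * (J ⊔ monomialIdeal x ((·.erase i) '' T)) ≤ J ⊔ monomialIdeal x T := by
    rw [Ideal.mul_sup]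
    exact sup_le_sup mul_le_right (span_singleton_mul_monomialIdeal_image_erase_le T i)
  exact this (mul_mem_mul (mem_span_singleton_self _) hz)

theorem mem_sup_monomialIdeal_image_erase_of_mul_mem
    (hreg : ∀ r, x i * r ∈ J ⊔ monomialIdeal x {s ∈ T | i ∉ s} →
      r ∈ J ⊔ monomialIdeal x {s ∈ T | i ∉ s})
    {z : R} (hz : x i * z ∈ J ⊔ monomialIdeal x T) :
    z ∈ J ⊔ monomialIdeal x ((·.erase i) '' T) := by
  rw [monomialIdeal_eq_sup T i, ← sup_assoc] at hz
  obtain ⟨j, hj, _, hak, hjk⟩ := Submodule.mem_sup.1 hz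
  obtain ⟨k, hk, rfl⟩ := mem_span_singleton_mul.1 hak
  have hzk : z - k ∈ J ⊔ monomialIdeal x {s ∈ T | i ∉ s} :=
    hreg _ (by rwa [mul_sub, ← hjk, add_sub_cancel_right])
  rw [← sub_add_cancel z k]
  exact add_mem
    (sup_le_sup_left (monomialIdeal_mono (filter_notMem_subset_image_erase T i)) J hzk)
    (mem_sup_right hk)

end Monomial

section Regular

variable {ι : Type*}

/-- Equivalently, every ordering of every finite subfamily of `x` is a weakly regular sequence. -/
def IsRegularInAnyOrder (x : ι → R) : Prop :=
  ∀ (A : Finset ι) (k : ι), k ∉ A → ∀ r, x k * r ∈ span (x '' A) → r ∈ span (x '' A)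

variable {x : ι → R}

theorem isRegularInAnyOrder_of_isWeaklyRegular [IsNoetherianRing R] {l : List ι}
    (hmem : ∀ i, i ∈ l) (hreg : IsWeaklyRegular R (l.map x))
    (hjac : ∀ i, x i ∈ jacobson (⊥ : Ideal R)) :
    IsRegularInAnyOrder x := by
  intro A k hkA r hr
  obtain ⟨rest, hperm⟩ : ∃ rest, l.Perm (A.toList ++ [k] ++ rest) := by
    have hnd : (A.toList ++ [k]).Nodup := by
      rw [← List.concat_eq_append]
      exact (Finset.nodup_toList A).concat (by simpa using hkA)
    obtain ⟨l', hl', hsub⟩ := hnd.subperm fun i _ => hmem i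
    obtain ⟨rest, hrest⟩ := hsub.exists_perm_append
    exact ⟨rest, hrest.trans (hl'.append_right rest)⟩
  have hreg' := hreg.of_perm_of_subset_jacobson_annihilator (hperm.map x) fun r hr => by
    obtain ⟨i, -, rfl⟩ := List.mem_map.1 hr
    exact jacobson_mono bot_le (hjac i)
  rw [List.map_append, isWeaklyRegular_append_iff, List.map_append, isWeaklyRegular_append_iff,
    List.map_singleton, isWeaklyRegular_singleton_iff] at hreg'
  have hspan : ofList (A.toList.map x) = span (x '' A) := congrArg span (by ext; simp)
  have := mem_of_isSMulRegular_quotient_of_smul_mem hreg'.1.2 (x := r)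
  rw [smul_eq_mul, mul_top, hspan] at this
  exact this hr

variable [DecidableEq ι]

theorem forall_mem_filter_notMem_subset {T : Set (Finset ι)} {i : ι} {u : Finset ι}
    (hT : ∀ s ∈ T, s ⊆ insert i u) : ∀ s ∈ {s ∈ T | i ∉ s}, s ⊆ u :=
  fun s hs => (Finset.subset_insert_iff_of_notMem hs.2).1 (hT s hs.1)

theorem forall_mem_image_erase_subset {T : Set (Finset ι)} {i : ι} {u : Finset ι}
    (hT : ∀ s ∈ T, s ⊆ insert i u) : ∀ s ∈ (·.erase i) '' T, s ⊆ u := by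
  rintro _ ⟨s, hs, rfl⟩
  exact Finset.subset_insert_iff.1 (hT s hs)

theorem span_image_insert (A : Finset ι) (i : ι) :
    span (x '' ↑(insert i A)) = span {x i} ⊔ span (x '' A) := by
  rw [Finset.coe_insert, Set.image_insert_eq, span_insert]

theorem IsRegularInAnyOrder.mem_of_mul_mem_sup_monomialIdeal (hx : IsRegularInAnyOrder x)
    (u : Finset ι) {A : Finset ι} {T : Set (Finset ι)} {k : ι} (hA : Disjoint u A)
    (hkA : k ∉ A) (hku : k ∉ u) (hT : ∀ s ∈ T, s ⊆ u) {r : R}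
    (hr : x k * r ∈ span (x '' A) ⊔ monomialIdeal x T) :
    r ∈ span (x '' A) ⊔ monomialIdeal x T := by
  induction u using Finset.induction_on generalizing A T k r with
  | empty =>
    obtain rfl | rfl := Set.subset_singleton_iff_eq.1 fun s hs => Finset.subset_empty.1 (hT s hs)
    · rw [monomialIdeal_empty, sup_bot_eq] at hr ⊢
      exact hx A k hkA r hr
    · simp [monomialIdeal_eq_top_of_empty_mem (Set.mem_singleton _)]
  | insert i u hiu ih =>
    rw [Finset.disjoint_insert_left] at hA
    obtain ⟨hiA, hA⟩ := hA
    rw [Finset.mem_insert, not_or] at hku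
    obtain ⟨hki, hku⟩ := hku
    have hT₀ := forall_mem_filter_notMem_subset hT
    have hT' := forall_mem_image_erase_subset hT
    have hsplit : span (x '' A) ⊔ monomialIdeal x T ≤
        span (x '' ↑(insert i A)) ⊔ monomialIdeal x {s ∈ T | i ∉ s} := by
      rw [monomialIdeal_eq_sup T i, span_image_insert]
      exact sup_le (le_sup_of_le_left le_sup_right)
        (sup_le le_sup_right (mul_le_left.trans (le_sup_of_le_left le_sup_left)))
    have hr₀ := ih (A := insert i A) (Finset.disjoint_insert_right.2 ⟨hiu, hA⟩)
      (by simp [hki, hkA]) hku hT₀ (hsplit hr)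
    rw [span_image_insert, sup_assoc] at hr₀
    obtain ⟨_, hxi, j, hj, rfl⟩ := Submodule.mem_sup.1 hr₀
    obtain ⟨c, rfl⟩ := mem_span_singleton.1 hxi
    have hkc : x k * c ∈ span (x '' A) ⊔ monomialIdeal x ((·.erase i) '' T) := by
      refine mem_sup_monomialIdeal_image_erase_of_mul_mem (fun r => ih hA hiA hiu hT₀) ?_
      have := sub_mem hr (mul_mem_left _ (x k)
        (sup_le_sup_left (monomialIdeal_mono fun s hs => hs.1) (span (x '' A)) hj))
      rwa [mul_add, add_sub_cancel_right, mul_left_comm] at this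
    exact add_mem (mul_mem_sup_monomialIdeal (ih hA hkA hku hT' hkc))
      (sup_le_sup_left (monomialIdeal_mono fun s hs => hs.1) (span (x '' A)) hj)

theorem IsRegularInAnyOrder.mem_sup_monomialIdeal_of_forall_transversal
    (hx : IsRegularInAnyOrder x) (u : Finset ι) {A : Finset ι} {T : Set (Finset ι)}
    (hA : Disjoint u A) (hT : ∀ s ∈ T, s ⊆ u) {r : R}
    (hr : ∀ F ⊆ u, (∀ s ∈ T, ∃ i ∈ s, i ∈ F) → r ∈ span (x '' ↑(A ∪ F))) :
    r ∈ span (x '' A) ⊔ monomialIdeal x T := by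
  induction u using Finset.induction_on generalizing A T with
  | empty =>
    obtain rfl | rfl := Set.subset_singleton_iff_eq.1 fun s hs => Finset.subset_empty.1 (hT s hs)
    · rw [monomialIdeal_empty, sup_bot_eq]
      simpa using hr ∅ subset_rfl (by simp)
    · simp [monomialIdeal_eq_top_of_empty_mem (Set.mem_singleton _)]
  | insert i u hiu ih =>
    rw [Finset.disjoint_insert_left] at hA
    obtain ⟨hiA, hA⟩ := hA
    have hr₀ : r ∈ span (x '' ↑(insert i A)) ⊔ monomialIdeal x {s ∈ T | i ∉ s} := by
      refine ih (Finset.disjoint_insert_right.2 ⟨hiu, hA⟩) (forall_mem_filter_notMem_subset hT)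
        fun G hG hGT => ?_
      rw [Finset.insert_union, ← Finset.union_insert]
      refine hr _ (Finset.insert_subset_insert i hG) fun s hs => ?_
      by_cases his : i ∈ s
      · exact ⟨i, his, Finset.mem_insert_self i G⟩
      · obtain ⟨j, hjs, hjG⟩ := hGT s ⟨hs, his⟩
        exact ⟨j, hjs, Finset.mem_insert_of_mem hjG⟩
    have hr' : r ∈ span (x '' A) ⊔ monomialIdeal x ((·.erase i) '' T) := by
      refine ih hA (forall_mem_image_erase_subset hT) fun G hG hGT =>
        hr G (hG.trans (Finset.subset_insert i u)) fun s hs => ?_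
      obtain ⟨j, hjs, hjG⟩ := hGT _ ⟨s, hs, rfl⟩
      exact ⟨j, Finset.mem_of_mem_erase hjs, hjG⟩
    rw [span_image_insert, sup_assoc] at hr₀
    obtain ⟨_, hxi, j, hj, rfl⟩ := Submodule.mem_sup.1 hr₀
    obtain ⟨c, rfl⟩ := mem_span_singleton.1 hxi
    have hc : c ∈ span (x '' A) ⊔ monomialIdeal x ((·.erase i) '' T) := by
      refine hx.mem_of_mul_mem_sup_monomialIdeal u hA hiA hiu (forall_mem_image_erase_subset hT) ?_
      simpa using sub_mem hr'
        (sup_le_sup_left (monomialIdeal_mono (filter_notMem_subset_image_erase T i))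
          (span (x '' A)) hj)
    exact add_mem (mul_mem_sup_monomialIdeal hc)
      (sup_le_sup_left (monomialIdeal_mono fun s hs => hs.1) (span (x '' A)) hj)

theorem IsRegularInAnyOrder.mem_monomialIdeal_of_forall_transversal [Fintype ι]
    (hx : IsRegularInAnyOrder x) {T : Set (Finset ι)} {r : R}
    (hr : ∀ F : Finset ι, (∀ s ∈ T, ∃ i ∈ s, i ∈ F) → r ∈ span (x '' F)) :
    r ∈ monomialIdeal x T := by
  simpa using hx.mem_sup_monomialIdeal_of_forall_transversal Finset.univ (A := ∅)
    (Finset.disjoint_empty_right _) (fun s _ => Finset.subset_univ s)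
    fun F _ hF => by simpa using hr F hF

theorem IsRegularInAnyOrder.isPrime_span_image_of_isPrime_union [IsNoetherianRing R]
    (hx : IsRegularInAnyOrder x) (hjac : ∀ i, x i ∈ jacobson (⊥ : Ideal R)) (D : Finset ι)
    {A : Finset ι}
    (hp : (span (x '' ↑(A ∪ D))).IsPrime) : (span (x '' A)).IsPrime := by
  induction D using Finset.induction_on generalizing A with
  | empty => simpa using hp
  | insert i D _ ih =>
    rw [Finset.union_insert, ← Finset.insert_union] at hp
    have hpi := ih hp
    by_cases hiA : i ∈ A
    · rwa [Finset.insert_eq_of_mem hiA] at hpi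
    rw [span_image_insert, sup_comm] at hpi
    exact isPrime_of_isPrime_sup_span_singleton (jacobson_mono bot_le (hjac i)) (hx A i hiA) hpi

end Regular

end

theorem stmt_11_general {R : Type*} [CommRing R] [IsNoetherianRing R] {d : ℕ} (x : Fin d → R)
    (hreg : RingTheory.Sequence.IsRegular R (List.ofFn x))
    (hjac : ∀ i, x i ∈ Ideal.jacobson (⊥ : Ideal R))
    (hprime : (Ideal.span (Set.range x)).IsPrime)
    (I : Ideal R)
    (hsf : ∃ T : Set (Finset (Fin d)), I = Ideal.span ((fun s => ∏ i ∈ s, x i) '' T)) :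
    I = sInf I.minimalPrimes := by
  obtain ⟨T, rfl⟩ := hsf
  have hx : IsRegularInAnyOrder x := isRegularInAnyOrder_of_isWeaklyRegular
    List.mem_finRange (List.ofFn_eq_map ▸ hreg.toIsWeaklyRegular) hjac
  refine le_antisymm (le_sInf fun p hp => hp.1.2) ?_
  rw [sInf_minimalPrimes]
  refine fun r hr => (hx.mem_monomialIdeal_of_forall_transversal fun F hF => ?_ :
    r ∈ monomialIdeal x T)
  have hpF : (span (x '' F)).IsPrime :=
    hx.isPrime_span_image_of_isPrime_union hjac Finset.univ (by simpa using hprime)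
  exact (hpF.radical_le_iff.2 (monomialIdeal_le_span_image hF)) hr

theorem stmt_11 {R : Type*} [CommRing R] [IsNoetherianRing R] {d : ℕ} (x : Fin d → R)
    (hreg : RingTheory.Sequence.IsRegular R (List.ofFn x))
    (hjac : ∀ i, x i ∈ Ideal.jacobson (⊥ : Ideal R))
    (hprime : (Ideal.span (Set.range x)).IsPrime)
    (I : Ideal R) (hIproper : I ≠ ⊤)
    (hsf : ∃ T : Set (Finset (Fin d)), I = Ideal.span ((fun s => ∏ i ∈ s, x i) '' T)) :
    I = sInf I.minimalPrimes :=
  stmt_11_general x hreg hjac hprime I hsf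
end
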